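/- Let n ≥ 2 and let Hⁿ = {x ∈ ℝⁿ : xₙ > 0}. For all x,y ∈ Hⁿ one has v_{Hⁿ}(x,y) ≤ ρ_{Hⁿ}(x,y), and the inequality is sharp: for every ε > 0 there exist distinct x,y ∈ Hⁿ with v_{Hⁿ}(x,y) > (1−ε)·ρ_{Hⁿ}(x,y). -/

import Mathlib

open EuclideanGeometry Real Set

/-- The visual angle metric on a domain `G ⊊ ℝⁿ`:
`v_G(x,y) = sup_{z ∈ ∂G} ∠(x,z,y)`. -/
noncomputable def visualAngle {n : ℕ} (G : Set (EuclideanSpace ℝ (Fin n)))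
    (x y : EuclideanSpace ℝ (Fin n)) : ℝ :=
  sSup ((fun z => ∠ x z y) '' frontier G)

/-- Inverse hyperbolic cosine. -/
noncomputable def arcosh (t : ℝ) : ℝ := Real.log (t + Real.sqrt (t ^ 2 - 1))

/-- The upper half space `Hⁿ = {x ∈ ℝⁿ : xₙ > 0}` with `n = m + 2 ≥ 2`. -/
def upperHalf (m : ℕ) : Set (EuclideanSpace ℝ (Fin (m + 2))) :=
  {x | 0 < x (Fin.last (m + 1))}

/-- The hyperbolic metric of the upper half space:
`ρ_{Hⁿ}(x,y) = arcosh(1 + |x−y|²/(2 xₙ yₙ))`. -/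
noncomputable def rhoHalf {m : ℕ} (x y : EuclideanSpace ℝ (Fin (m + 2))) : ℝ :=
  _root_.arcosh (1 + dist x y ^ 2 / (2 * x (Fin.last (m + 1)) * y (Fin.last (m + 1))))

/-!
Let `z` be a boundary point and `ȳ` the mirror image of `y` in `∂Hⁿ`. Then `|z - ȳ| = |z - y|` and
`|x - ȳ|² = |x - y|² + 4 xₙ yₙ`, so the triangle inequality gives
`|x - y|² + 4 xₙ yₙ ≤ (|x - z| + |y - z|)²`. By the law of cosines this bounds `∠ x z y` by
`2 arctan s` with `s = |x - y| / (2 √(xₙ yₙ))`, whereas `ρ(x, y) = arcosh (1 + 2 s²) = 2 arsinh s`,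
and `arctan ≤ arsinh` on `[0, ∞)`.

For sharpness, the points `eₙ ∓ s e₁` subtend the angle `2 arctan s` at the origin, are at
hyperbolic distance `2 arsinh s`, and `(1 - s²) arsinh s < arctan s` for `s > 0`.
-/

theorem arcosh_one_add_two_mul_sq {s : ℝ} (hs : 0 ≤ s) :
    _root_.arcosh (1 + 2 * s ^ 2) = 2 * arsinh s := by
  have hcosh : 1 + 2 * s ^ 2 = cosh (2 * arsinh s) := by
    rw [cosh_two_mul, cosh_sq', sinh_arsinh]; ring
  rw [hcosh]
  exact Real.arcosh_cosh (by simpa using hs)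

namespace Real

theorem cos_two_mul_arctan (s : ℝ) : cos (2 * arctan s) = (1 - s ^ 2) / (1 + s ^ 2) := by
  rw [cos_two_mul, cos_arctan, div_pow, one_pow, sq_sqrt (by positivity)]
  field_simp
  ring

theorem sin_two_mul_arctan (s : ℝ) : sin (2 * arctan s) = 2 * s / (1 + s ^ 2) := by
  rw [sin_two_mul, sin_arctan, cos_arctan, mul_assoc, div_mul_div_comm, mul_one,
    mul_self_sqrt (by positivity), mul_div_assoc]

theorem div_one_add_sq_lt_arctan {s : ℝ} (hs : 0 < s) : s / (1 + s ^ 2) < arctan s := by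
  have h := sin_lt (mul_pos two_pos (arctan_pos.2 hs))
  rw [sin_two_mul_arctan, mul_div_assoc] at h
  linarith

theorem arctan_le_arsinh {s : ℝ} (hs : 0 ≤ s) : arctan s ≤ arsinh s := by
  have hderiv (t : ℝ) : HasDerivAt (fun t => arsinh t - arctan t)
      ((√(1 + t ^ 2))⁻¹ - 1 / (1 + t ^ 2)) t :=
    (hasDerivAt_arsinh t).sub (hasDerivAt_arctan t)
  have hmono : Monotone fun t => arsinh t - arctan t := by
    refine monotone_of_deriv_nonneg (fun t => (hderiv t).differentiableAt) fun t => ?_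
    have hsqrt : √(1 + t ^ 2) ≤ 1 + t ^ 2 := sqrt_le_self_iff.2 (Or.inr (by nlinarith))
    rw [(hderiv t).deriv, sub_nonneg, one_div]
    exact inv_anti₀ (by positivity) hsqrt
  simpa using hmono hs

theorem arsinh_le_self {s : ℝ} (hs : 0 ≤ s) : arsinh s ≤ s := by
  simpa using arsinh_le_arsinh.2 (self_le_sinh_iff.2 hs)

theorem one_sub_sq_mul_arsinh_lt_arctan {s : ℝ} (hs : 0 < s) :
    (1 - s ^ 2) * arsinh s < arctan s := by
  rcases le_or_gt s 1 with hs1 | hs1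
  · have hsq : 0 ≤ 1 - s ^ 2 := by nlinarith
    calc (1 - s ^ 2) * arsinh s ≤ (1 - s ^ 2) * s := by
          gcongr; exact arsinh_le_self hs.le
      _ ≤ s / (1 + s ^ 2) := by
          rw [le_div_iff₀ (by positivity)]; nlinarith [pow_nonneg hs.le 4]
      _ < arctan s := div_one_add_sq_lt_arctan hs
  · have hneg : (1 - s ^ 2) * arsinh s ≤ 0 :=
      mul_nonpos_of_nonpos_of_nonneg (by nlinarith) (arsinh_nonneg_iff.2 hs.le)
    linarith [arctan_pos.2 hs]

end Real

section InnerProductSpace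

open RealInnerProductSpace

variable {V : Type*} [NormedAddCommGroup V] [InnerProductSpace ℝ V]

theorem dist_sq_add_four_mul_inner_le {e x y z : V} (he : ‖e‖ = 1) (hz : ⟪z, e⟫ = 0) :
    dist x y ^ 2 + 4 * (⟪x, e⟫ * ⟪y, e⟫) ≤ (dist x z + dist y z) ^ 2 := by
  set k := ⟪y, e⟫
  set y' := y - (2 * k) • e with hy'
  have hnorm (w : V) : ‖w + (2 * k) • e‖ ^ 2 = ‖w‖ ^ 2 + 4 * k * (⟪w, e⟫ + k) := by
    rw [norm_add_sq_real, inner_smul_right, norm_smul, mul_pow, he, Real.norm_eq_abs, sq_abs]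
    ring
  have hzy' : dist z y' = dist y z := by
    rw [dist_comm y, dist_eq_norm, dist_eq_norm,
      show z - y' = z - y + (2 * k) • e by rw [hy']; abel,
      ← sq_eq_sq₀ (norm_nonneg _) (norm_nonneg _), hnorm, inner_sub_left, hz]
    ring
  have hxy' : dist x y' ^ 2 = dist x y ^ 2 + 4 * (⟪x, e⟫ * k) := by
    rw [dist_eq_norm, dist_eq_norm, show x - y' = x - y + (2 * k) • e by rw [hy']; abel, hnorm,
      inner_sub_left]
    ring
  rw [← hxy', ← hzy']
  exact pow_le_pow_left₀ dist_nonneg (dist_triangle x z y') 2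

theorem angle_le_two_mul_arctan {x y z : V} (hxz : x ≠ z) (hyz : y ≠ z) {d : ℝ} (hd : 0 < d)
    (h : dist x y ^ 2 + d ^ 2 ≤ (dist x z + dist y z) ^ 2) :
    ∠ x z y ≤ 2 * arctan (dist x y / d) := by
  set a := dist x z
  set b := dist y z
  set c := dist x y
  have ha : 0 < a := dist_pos.2 hxz
  have hb : 0 < b := dist_pos.2 hyz
  have hcos : cos (∠ x z y) = (a ^ 2 + b ^ 2 - c ^ 2) / (2 * a * b) := by
    have := dist_sq_eq_dist_sq_add_dist_sq_sub_two_mul_dist_mul_dist_mul_cos_angle x z y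
    field_simp
    linarith
  have hcos' : cos (2 * arctan (c / d)) = (d ^ 2 - c ^ 2) / (d ^ 2 + c ^ 2) := by
    rw [cos_two_mul_arctan]
    field_simp
  have hmem : 2 * arctan (c / d) ∈ Icc 0 π := by
    have := arctan_lt_pi_div_two (c / d)
    constructor <;> [positivity; linarith]
  rw [← strictAntiOn_cos.le_iff_ge hmem ⟨angle_nonneg x z y, angle_le_pi x z y⟩, hcos, hcos',
    div_le_div_iff₀ (by positivity) (by positivity)]
  -- the difference of the two sides is `d² (a - b)² + c² ((a + b)² - c² - d²)`
  nlinarith [mul_nonneg (sq_nonneg d) (sq_nonneg (a - b)),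
    mul_nonneg (sq_nonneg c) (sub_nonneg.2 h)]

theorem angle_sub_smul_add_smul {u v : V} (hu : ‖u‖ = 1) (hv : ‖v‖ = 1) (huv : ⟪u, v⟫ = 0)
    {s : ℝ} (hs : 0 ≤ s) : InnerProductGeometry.angle (u - s • v) (u + s • v) = 2 * arctan s := by
  have hnorm (t : ℝ) : ‖u + t • v‖ = √(1 + t ^ 2) := by
    rw [eq_comm, sqrt_eq_iff_eq_sq (by positivity) (norm_nonneg _), norm_add_sq_real,
      inner_smul_right, huv, norm_smul, mul_pow, hu, hv, Real.norm_eq_abs, sq_abs]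
    ring
  have hinner : ⟪u - s • v, u + s • v⟫ = 1 - s ^ 2 := by
    simp only [inner_sub_left, inner_add_right, inner_smul_left, inner_smul_right,
      real_inner_self_eq_norm_sq, real_inner_comm u v, huv, hu, hv]
    simp only [conj_trivial]
    ring
  have hprod : ‖u - s • v‖ * ‖u + s • v‖ = 1 + s ^ 2 := by
    rw [sub_eq_add_neg, ← neg_smul, hnorm, hnorm, neg_sq, mul_self_sqrt (by positivity)]
  rw [InnerProductGeometry.angle, hinner, hprod, ← cos_two_mul_arctan]
  exact arccos_cos (by positivity) (by linarith [arctan_lt_pi_div_two s])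

end InnerProductSpace

theorem visualAngle_le {n : ℕ} {G : Set (EuclideanSpace ℝ (Fin n))}
    {x y : EuclideanSpace ℝ (Fin n)} {r : ℝ} (hr : 0 ≤ r) (h : ∀ z ∈ frontier G, ∠ x z y ≤ r) :
    visualAngle G x y ≤ r :=
  Real.sSup_le (by rintro _ ⟨z, hz, rfl⟩; exact h z hz) hr

theorem angle_le_visualAngle {n : ℕ} {G : Set (EuclideanSpace ℝ (Fin n))}
    {x y z : EuclideanSpace ℝ (Fin n)} (hz : z ∈ frontier G) : ∠ x z y ≤ visualAngle G x y :=
  le_csSup ⟨π, by rintro _ ⟨w, -, rfl⟩; exact angle_le_pi x w y⟩ ⟨z, hz, rfl⟩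

section UpperHalf

open RealInnerProductSpace

variable {m : ℕ}

theorem frontier_upperHalf :
    frontier (upperHalf m) = {z | z (Fin.last (m + 1)) = 0} := by
  let p := EuclideanSpace.proj (𝕜 := ℝ) (Fin.last (m + 1))
  have hp : IsOpenMap p :=
    p.isOpenMap fun t => ⟨EuclideanSpace.single (Fin.last (m + 1)) t, by simp [p]⟩
  have := hp.preimage_frontier_eq_frontier_preimage p.continuous (Ioi 0)
  rw [frontier_Ioi] at this
  exact this.symm

theorem rhoHalf_eq_two_mul_arsinh {x y : EuclideanSpace ℝ (Fin (m + 2))}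
    (hx : x ∈ upperHalf m) (hy : y ∈ upperHalf m) :
    rhoHalf x y =
      2 * arsinh (dist x y / (2 * √(x (Fin.last (m + 1)) * y (Fin.last (m + 1))))) := by
  have hxy : 0 < x (Fin.last (m + 1)) * y (Fin.last (m + 1)) := mul_pos hx hy
  rw [← arcosh_one_add_two_mul_sq (by positivity), rhoHalf, div_pow, mul_pow,
    sq_sqrt hxy.le, mul_assoc 2 (x _)]
  field_simp

theorem rhoHalf_nonneg {x y : EuclideanSpace ℝ (Fin (m + 2))}
    (hx : x ∈ upperHalf m) (hy : y ∈ upperHalf m) : 0 ≤ rhoHalf x y := by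
  rw [rhoHalf_eq_two_mul_arsinh hx hy]
  exact mul_nonneg zero_le_two (arsinh_nonneg_iff.2 (by positivity))

theorem angle_le_rhoHalf {x y z : EuclideanSpace ℝ (Fin (m + 2))}
    (hx : x ∈ upperHalf m) (hy : y ∈ upperHalf m) (hz : z (Fin.last (m + 1)) = 0) :
    ∠ x z y ≤ rhoHalf x y := by
  set e := EuclideanSpace.single (Fin.last (m + 1)) (1 : ℝ)
  have hcoord (w : EuclideanSpace ℝ (Fin (m + 2))) : ⟪w, e⟫ = w (Fin.last (m + 1)) := by
    simp [e, EuclideanSpace.inner_single_right]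
  have hne {w : EuclideanSpace ℝ (Fin (m + 2))} (hw : w ∈ upperHalf m) : w ≠ z :=
    fun h => (h ▸ hw : z ∈ upperHalf m).ne' hz
  have hxy : 0 < x (Fin.last (m + 1)) * y (Fin.last (m + 1)) := mul_pos hx hy
  have hrefl := dist_sq_add_four_mul_inner_le (x := x) (y := y) (by simp [e])
    ((hcoord z).trans hz)
  rw [hcoord, hcoord] at hrefl
  calc ∠ x z y
        ≤ 2 * arctan (dist x y / (2 * √(x (Fin.last (m + 1)) * y (Fin.last (m + 1))))) := by
        refine angle_le_two_mul_arctan (hne hx) (hne hy) (by positivity) ?_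
        rwa [mul_pow, sq_sqrt hxy.le, show (2 : ℝ) ^ 2 = 4 by norm_num]
    _ ≤ rhoHalf x y := by
        rw [rhoHalf_eq_two_mul_arsinh hx hy]
        gcongr
        exact arctan_le_arsinh (by positivity)

end UpperHalf

theorem exists_rhoHalf_eq_arsinh_and_arctan_le_visualAngle (m : ℕ) {s : ℝ} (hs : 0 < s) :
    ∃ x ∈ upperHalf m, ∃ y ∈ upperHalf m, x ≠ y ∧ rhoHalf x y = 2 * arsinh s ∧
      2 * arctan s ≤ visualAngle (upperHalf m) x y := by
  set u := EuclideanSpace.single (Fin.last (m + 1)) (1 : ℝ)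
  set v := EuclideanSpace.single (0 : Fin (m + 2)) (1 : ℝ)
  have hv : v (Fin.last (m + 1)) = 0 := by simp [v, (Fin.last_pos' (n := m + 1)).ne']
  have hx : u - s • v ∈ upperHalf m := by simp [upperHalf, u, hv]
  have hy : u + s • v ∈ upperHalf m := by simp [upperHalf, u, hv]
  have hdist : dist (u - s • v) (u + s • v) = 2 * s := by
    rw [dist_eq_norm, show u - s • v - (u + s • v) = (-(2 * s)) • v by module, norm_smul]
    simp [v, abs_of_pos hs]
  have hangle : ∠ (u - s • v) 0 (u + s • v) = 2 * arctan s := by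
    rw [EuclideanGeometry.angle, vsub_eq_sub, vsub_eq_sub, sub_zero, sub_zero]
    exact angle_sub_smul_add_smul (by simp [u]) (by simp [v])
      (by simp [u, v, EuclideanSpace.inner_single_left]) hs.le
  refine ⟨_, hx, _, hy, fun h => by simp [h, hs.ne'] at hdist, ?_, ?_⟩
  · rw [rhoHalf_eq_two_mul_arsinh hx hy, hdist]
    simp [u, hv]
  · rw [← hangle]
    exact angle_le_visualAngle (by simp [frontier_upperHalf])

theorem stmt6 (m : ℕ) :
    (∀ x ∈ upperHalf m, ∀ y ∈ upperHalf m,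
      visualAngle (upperHalf m) x y ≤ rhoHalf x y) ∧
    (∀ ε : ℝ, 0 < ε →
      ∃ x ∈ upperHalf m, ∃ y ∈ upperHalf m,
        x ≠ y ∧ (1 - ε) * rhoHalf x y < visualAngle (upperHalf m) x y) := by
  refine ⟨fun x hx y hy => ?_, fun ε hε => ?_⟩
  · refine visualAngle_le (rhoHalf_nonneg hx hy) fun z hz => angle_le_rhoHalf hx hy ?_
    rwa [frontier_upperHalf] at hz
  · obtain ⟨x, hx, y, hy, hxy, hrho, hangle⟩ :=
      exists_rhoHalf_eq_arsinh_and_arctan_le_visualAngle m (sqrt_pos.2 hε)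
    refine ⟨x, hx, y, hy, hxy, ?_⟩
    calc (1 - ε) * rhoHalf x y = 2 * ((1 - √ε ^ 2) * arsinh √ε) := by
          rw [hrho, sq_sqrt hε.le]; ring
      _ < 2 * arctan √ε := by gcongr; exact one_sub_sq_mul_arsinh_lt_arctan (sqrt_pos.2 hε)
      _ ≤ visualAngle (upperHalf m) x y := hangle
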